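/- arXiv:2307.09925 — 3 statements merged into one kernel-verified Lean document; each statement's English description precedes it below -/
import Mathlib

section
/- For all positive integers n and m and all vectors a, b ∈ ℕ^n, the m-th generalized Pitman–Stanley polytope PS_n^m(a,b) is integrally equivalent to the flow polytope F_{G(n,m)}(a,b); concretely, the linear map Φ sending a flow f ∈ F_{G(n,m)}(a,b) to the n×m matrix (x_{ij}) with x_{ij} = f((i,j−1)→(i,j)) for 1 ≤ i ≤ n and 1 ≤ j ≤ m is a bijection from F_{G(n,m)}(a,b) onto PS_n^m(a,b) that restricts to a bijection between the integer flows of F_{G(n,m)}(a,b) and the integer points of PS_n^m(a,b). -/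
open scoped BigOperators Classical

namespace GPS

/-! ### Vectors in `ℕ^n`, dominance order, support vectors -/

/-- Partial sum `a 1 + ⋯ + a i` of the first `i` entries of `a ∈ ℕ^n`
(entries indexed by `Fin n`). -/
def psum {n : ℕ} (a : Fin n → ℕ) (i : ℕ) : ℕ :=
  ∑ k : Fin n, if (k : ℕ) < i then a k else 0

/-- `a` dominates `b`: all partial sums of `a` are at least those of `b`. -/
def Dominates {n : ℕ} (a b : Fin n → ℕ) : Prop :=
  ∀ i : ℕ, psum b i ≤ psum a i

/-- The 0/1 vector `χ(u)` with the same support as `u`. -/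
def chi {n : ℕ} (u : Fin n → ℕ) : Fin n → ℕ := fun i => if u i = 0 then 0 else 1

/-- `z(u,w) ≤ z`: `u ⊵ w`, `χ(u) ⊵ χ(w)`, and the zeros of `u` can be matched
injectively to zeros of `w`, each zero position `i` of `u` matched to a zero
position `j` of `w` with `j ≤ i ≤ j + z`.  (This is equivalent to the greedy
matching `M` of the zeros having `i - j ≤ z` for all `(i,j) ∈ M`.)
In particular `DomZle 1 u w` is the relation `u ⊵₁ w`. -/
def DomZle {n : ℕ} (z : ℕ) (u w : Fin n → ℕ) : Prop :=
  Dominates u w ∧ Dominates (chi u) (chi w) ∧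
  ∃ φ : Fin n → Fin n, Set.InjOn φ { i | u i = 0 } ∧
    ∀ i, u i = 0 → w (φ i) = 0 ∧ (φ i : ℕ) ≤ (i : ℕ) ∧ (i : ℕ) ≤ (φ i : ℕ) + z

/-! ### The grid graph `G(n,m)` and its flow polytope -/

/-- Vertices of the graph `G(n,m)`: the grid vertices `(i,j)` for `1 ≤ i ≤ n`,
`0 ≤ j ≤ m` (encoded as `some (i,j)` with `i : Fin n`, `j : Fin (m+1)`)
together with the sink `s` (encoded as `none`). -/
abbrev Vtx (n m : ℕ) := Option (Fin n × Fin (m + 1))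

/-- Edges of `G(n,m)`: horizontal edges `(i,j) → (i,j+1)`, vertical edges
`(i,j) → (i+1,j)`, and the edges `(n,j) → s`. -/
def IsEdge (n m : ℕ) : Vtx n m → Vtx n m → Prop
  | some (i, j), some (i', j') =>
      (i = i' ∧ (j' : ℕ) = (j : ℕ) + 1) ∨ ((i' : ℕ) = (i : ℕ) + 1 ∧ j = j')
  | some (i, _), none => (i : ℕ) = n - 1
  | none, _ => False

/-- The netflow vector for `F_{G(n,m)}(a,b)`: vertex `(i,0)` has netflow `a i`,
vertex `(i,m)` has netflow `-b i`, interior vertices have netflow `0`, and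
the sink has netflow `-∑ (a i - b i)`. -/
noncomputable def netflow (n m : ℕ) (a b : Fin n → ℕ) : Vtx n m → ℝ
  | some (i, j) =>
      (if (j : ℕ) = 0 then (a i : ℝ) else 0) - (if (j : ℕ) = m then (b i : ℝ) else 0)
  | none => -∑ i : Fin n, ((a i : ℝ) - (b i : ℝ))

/-- The flow polytope `F_{G(n,m)}(a,b)`: nonnegative functions on the edges of
`G(n,m)` (encoded as functions on pairs of vertices vanishing off the edges)
with outflow minus inflow equal to the netflow at every vertex. -/
def FlowPolytope (n m : ℕ) (a b : Fin n → ℕ) : Set (Vtx n m → Vtx n m → ℝ) :=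
  { f | (∀ u v, ¬ IsEdge n m u v → f u v = 0) ∧
        (∀ u v, 0 ≤ f u v) ∧
        (∀ u, (∑ v, f u v) - (∑ v, f v u) = netflow n m a b u) }

/-- An integer flow: a flow taking integer values on all edges. -/
def IsIntegerFlow {n m : ℕ} (f : Vtx n m → Vtx n m → ℝ) : Prop :=
  ∀ u v, ∃ z : ℤ, f u v = z

/-- `x` is an extreme point (vertex) of `P`: `x ∈ P` and `x` is not the midpoint
of two distinct points of `P`. -/
def IsExtremePt {E : Type*} [AddCommGroup E] [Module ℝ E] (P : Set E) (x : E) : Prop :=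
  x ∈ P ∧ ∀ y ∈ P, ∀ z ∈ P, x = (2 : ℝ)⁻¹ • (y + z) → y = z

/-- An unsplittable flow: each vertex has at most one outgoing edge with positive
flow, and no vertex with negative netflow has positive flow on an outgoing edge. -/
def IsUnsplittable (n m : ℕ) (a b : Fin n → ℕ) (f : Vtx n m → Vtx n m → ℝ) : Prop :=
  (∀ u v w, 0 < f u v → 0 < f u w → v = w) ∧
  (∀ u, netflow n m a b u < 0 → ∀ v, f u v = 0)

/-- The number of vertices (extreme points) of `F_{G(n,m)}(a,b)`,
denoted `v^{(n,m)}(a,b)`. -/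
noncomputable def numVertices (n m : ℕ) (a b : Fin n → ℕ) : ℕ :=
  Set.ncard { f | IsExtremePt (FlowPolytope n m a b) f }

/-- The number of unsplittable integer flows in `F_{G(n,m)}(a,b)`,
denoted `v_unsplit^{(n,m)}(a,b)`. -/
noncomputable def vUnsplit (n m : ℕ) (a b : Fin n → ℕ) : ℕ :=
  Set.ncard { f | f ∈ FlowPolytope n m a b ∧ IsIntegerFlow f ∧ IsUnsplittable n m a b f }

end GPS
/-! ### Skew shapes and plane partitions -/

namespace GPS

/-- The partition `λ(a) = (a_1+⋯+a_n, …, a_1+a_2, a_1)`, with rows indexed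
`1,…,n` (so `lamOf n a i = a_1 + ⋯ + a_{n+1-i}`). -/
def lamOf (n : ℕ) (a : Fin n → ℕ) : ℕ → ℕ := fun i => psum a (n + 1 - i)

/-- `(i,j)` is a cell of the skew shape `λ/μ` (with `n` rows, rows and columns
indexed from 1): `1 ≤ i ≤ n` and `μ_i < j ≤ λ_i`. -/
def IsCellOf (n : ℕ) (lam mu : ℕ → ℕ) (i j : ℕ) : Prop :=
  1 ≤ i ∧ i ≤ n ∧ mu i < j ∧ j ≤ lam i

/-- A plane partition of skew shape `λ/μ` with entries in `{0,1,…,m}`: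
an array vanishing outside the shape, with entries at most `m`, weakly
decreasing along rows and columns. -/
def IsSkewPP (n m : ℕ) (lam mu : ℕ → ℕ) (π : ℕ → ℕ → ℕ) : Prop :=
  (∀ i j, ¬ IsCellOf n lam mu i j → π i j = 0) ∧
  (∀ i j, IsCellOf n lam mu i j → π i j ≤ m) ∧
  (∀ i j, IsCellOf n lam mu i j → IsCellOf n lam mu i (j + 1) → π i (j + 1) ≤ π i j) ∧
  (∀ i j, IsCellOf n lam mu i j → IsCellOf n lam mu (i + 1) j → π (i + 1) j ≤ π i j)

/-- The conjugate partition: `conjOf n λ j = #{1 ≤ i ≤ n : λ_i ≥ j}`. -/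
def conjOf (n : ℕ) (lam : ℕ → ℕ) (j : ℕ) : ℕ :=
  ((Finset.Icc 1 n).filter fun i => j ≤ lam i).card

/-- A vertex plane partition of shape `λ/μ` with entries at most `m`
(Definition 4.5 of the paper). -/
def IsVertexPP (n m : ℕ) (lam mu : ℕ → ℕ) (π : ℕ → ℕ → ℕ) : Prop :=
  IsSkewPP n m lam mu π ∧
  ∀ j : ℕ, 1 ≤ j →
    conjOf n mu j < conjOf n lam j → conjOf n mu (j + 1) < conjOf n lam (j + 1) →
    -- (i) `μ'_j = μ'_{j+1}` and `λ'_j = λ'_{j+1}`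
    ((conjOf n mu j = conjOf n mu (j + 1) ∧ conjOf n lam j = conjOf n lam (j + 1) →
        ∀ i, π i j = π i (j + 1)) ∧
     -- (ii) `μ'_j = μ'_{j+1}` and `λ'_j > λ'_{j+1}`
     (conjOf n mu j = conjOf n mu (j + 1) ∧ conjOf n lam (j + 1) < conjOf n lam j →
        (∀ i, conjOf n mu (j + 1) + 2 ≤ i → i ≤ conjOf n lam (j + 1) →
          π i j = π i (j + 1) → π (i - 1) j = π (i - 1) (j + 1)) ∧
        (∀ i, conjOf n mu (j + 1) + 1 ≤ i → i ≤ conjOf n lam (j + 1) →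
          π i (j + 1) < π (i + 1) j ∨ π i (j + 1) = π i j)) ∧
     -- (iii) `λ'_j = λ'_{j+1}` and `μ'_j > μ'_{j+1}`
     (conjOf n lam j = conjOf n lam (j + 1) ∧ conjOf n mu (j + 1) < conjOf n mu j →
        (∀ i, conjOf n mu j + 1 ≤ i → i ≤ conjOf n lam j - 1 →
          π i j = π i (j + 1) → π (i + 1) j = π (i + 1) (j + 1)) ∧
        (∀ i, conjOf n mu j ≤ i → i ≤ conjOf n lam j - 1 →
          π i (j + 1) < π (i + 1) j ∨ π (i + 1) j = π (i + 1) (j + 1))) ∧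
     -- (iv) `μ'_j ≠ μ'_{j+1}` and `λ'_j ≠ λ'_{j+1}`
     (conjOf n mu j ≠ conjOf n mu (j + 1) ∧ conjOf n lam j ≠ conjOf n lam (j + 1) →
        ∀ imin imax : ℕ,
          ((IsCellOf n lam mu imin j ∧ IsCellOf n lam mu (imin - 1) (j + 1) ∧
              π imin j ≤ π (imin - 1) (j + 1)) ∧
            (∀ i, (IsCellOf n lam mu i j ∧ IsCellOf n lam mu (i - 1) (j + 1) ∧
              π i j ≤ π (i - 1) (j + 1)) → imin ≤ i)) →
          ((IsCellOf n lam mu (imax + 1) j ∧ IsCellOf n lam mu imax (j + 1) ∧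
              π (imax + 1) j ≤ π imax (j + 1)) ∧
            (∀ i, (IsCellOf n lam mu (i + 1) j ∧ IsCellOf n lam mu i (j + 1) ∧
              π (i + 1) j ≤ π i (j + 1)) → i ≤ imax)) →
          imin < imax → ∀ i, imin ≤ i → i ≤ imax → π i j = π i (j + 1)))

end GPS
/-! ### The graph `H_⊤(n)`, the matrix `A_n`, and general flow polytopes -/

namespace GPS

/-- Vertices of `H_⊤(n)`: `(i,-1), (i,0), (i,1)` for `1 ≤ i ≤ n` (encoded as
`some (i,j)` with `j : Fin 3` standing for levels `-1, 0, 1`) and a sink `s`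
(encoded as `none`). -/
abbrev HVtx (n : ℕ) := Option (Fin n × Fin 3)

/-- Edges of `H_⊤(n)`: `(i,-1) → (i,0)`, `(i,0) → (i,1)`, `(i,0) → (i+1,0)`,
and `(n,0) → s`. -/
def HIsEdge (n : ℕ) : HVtx n → HVtx n → Prop
  | some (i, j), some (i', j') =>
      (i = i' ∧ (j' : ℕ) = (j : ℕ) + 1) ∨
      ((j : ℕ) = 1 ∧ (j' : ℕ) = 1 ∧ (i' : ℕ) = (i : ℕ) + 1)
  | some (i, j), none => (j : ℕ) = 1 ∧ (i : ℕ) = n - 1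
  | none, _ => False

/-- The netflows for `F_{H_⊤(n)}(a,b)`: `(i,-1)` has netflow `a i`, `(i,1)` has
netflow `-b i`, `(i,0)` has netflow `0`, and the sink has `-∑ (a i - b i)`. -/
noncomputable def Hnetflow (n : ℕ) (a b : Fin n → ℕ) : HVtx n → ℝ
  | some (i, j) =>
      (if (j : ℕ) = 0 then (a i : ℝ) else 0) - (if (j : ℕ) = 2 then (b i : ℝ) else 0)
  | none => -∑ i : Fin n, ((a i : ℝ) - (b i : ℝ))

/-- The flow polytope `F_{H_⊤(n)}(a,b)`. -/
def FHtop (n : ℕ) (a b : Fin n → ℕ) : Set (HVtx n → HVtx n → ℝ) :=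
  { f | (∀ u v, ¬ HIsEdge n u v → f u v = 0) ∧
        (∀ u v, 0 ≤ f u v) ∧
        (∀ u, (∑ v, f u v) - (∑ v, f v u) = Hnetflow n a b u) }

/-- An unsplittable flow on `H_⊤(n)`. -/
def HUnsplittable (n : ℕ) (a b : Fin n → ℕ) (f : HVtx n → HVtx n → ℝ) : Prop :=
  (∀ u v w, 0 < f u v → 0 < f u w → v = w) ∧
  (∀ u, Hnetflow n a b u < 0 → ∀ v, f u v = 0)

/-- The `2^n × 2^n` matrix `A_n`, with rows and columns indexed by `{0,1}^n`,
whose `(j,k)` entry is `1` if `j ⊵₁ k` and `0` otherwise. -/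
noncomputable def An (n : ℕ) : Matrix (Fin n → Fin 2) (Fin n → Fin 2) ℤ :=
  Matrix.of fun j k =>
    if DomZle 1 (fun i => (j i : ℕ)) (fun i => (k i : ℕ)) then 1 else 0

/-- The support vector `χ(u)` as an element of `{0,1}^n` (encoded `Fin n → Fin 2`). -/
def chi2 {n : ℕ} (u : Fin n → ℕ) : Fin n → Fin 2 := fun i => if u i = 0 then 0 else 1

/-- The flow polytope `F_G(c)` of a directed graph on vertex set `Fin (N+1)`
with edge relation `E` and netflow vector `c`. -/
def FlowPolyGen (N : ℕ) (E : Fin (N + 1) → Fin (N + 1) → Prop)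
    (c : Fin (N + 1) → ℤ) : Set (Fin (N + 1) → Fin (N + 1) → ℝ) :=
  { f | (∀ u v, ¬ E u v → f u v = 0) ∧
        (∀ u v, 0 ≤ f u v) ∧
        (∀ u, (∑ v, f u v) - (∑ v, f v u) = (c u : ℝ)) }

end GPS
namespace GPS

/-- The generalized Pitman–Stanley polytope `PS_n^m(a,b)`: nonnegative `n × m`
matrices whose columns form a multichain between `b` and `a` in dominance order. -/
def PSpoly (n m : ℕ) (a b : Fin n → ℕ) : Set (Fin n → Fin m → ℝ) :=
  { x | (∀ i j, 0 ≤ x i j) ∧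
        (∀ i : Fin n, ∀ j j' : Fin m, (j' : ℕ) = (j : ℕ) + 1 →
          (∑ k : Fin n, if (k : ℕ) ≤ (i : ℕ) then x k j' else 0) ≤
            ∑ k : Fin n, if (k : ℕ) ≤ (i : ℕ) then x k j else 0) ∧
        (∀ i : Fin n, ∀ j : Fin m, (j : ℕ) = m - 1 →
          (psum b ((i : ℕ) + 1) : ℝ) ≤
            ∑ k : Fin n, if (k : ℕ) ≤ (i : ℕ) then x k j else 0) ∧
        (∀ i : Fin n, ∀ j : Fin m, (j : ℕ) = 0 →
          (∑ k : Fin n, if (k : ℕ) ≤ (i : ℕ) then x k j else 0) ≤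
            (psum a ((i : ℕ) + 1) : ℝ)) }

/-- The map `Φ` sending a flow `f` on `G(n,m)` to the matrix `(x_{ij})` where
`x_{ij}` is the flow on the horizontal edge `(i,j-1) → (i,j)`. -/
def Phi (n m : ℕ) (f : Vtx n m → Vtx n m → ℝ) : Fin n → Fin m → ℝ :=
  fun i j => f (some (i, j.castSucc)) (some (i, j.succ))


section Aux

variable {n m : ℕ}

lemma sum_ite_val {β : Type*} [AddCommMonoid β] (i : Fin n) (g : Fin n → β) :
    (∑ k : Fin n, if (k : ℕ) = (i : ℕ) then g k else 0) = g i := by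
  have : ∀ k : Fin n, (if (k : ℕ) = (i : ℕ) then g k else 0) = (if k = i then g k else 0) :=
    fun k => if_congr (Fin.val_eq_val k i) rfl rfl
  rw [Finset.sum_congr rfl (fun k _ => this k), Finset.sum_ite_eq' Finset.univ i g,
    if_pos (Finset.mem_univ i)]

def colS (x : Fin n → Fin m → ℝ) (k : ℕ) (j : Fin m) : ℝ :=
  ∑ i : Fin n, if (i : ℕ) ≤ k then x i j else 0

def vval (a b : Fin n → ℕ) (x : Fin n → Fin m → ℝ) (k : ℕ) (j : Fin (m + 1)) : ℝ :=
  (if (j : ℕ) = 0 then (psum a (k + 1) : ℝ) else 0)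
    - (if (j : ℕ) = m then (psum b (k + 1) : ℝ) else 0)
    - (if h : (j : ℕ) < m then colS x k ⟨j, h⟩ else 0)
    + (if h : 0 < (j : ℕ) then colS x k ⟨(j : ℕ) - 1, by have := j.isLt; omega⟩ else 0)

lemma psum_step (a : Fin n → ℕ) (i : Fin n) :
    psum a ((i : ℕ) + 1) = psum a (i : ℕ) + a i := by
  unfold psum
  have : ∀ k : Fin n, (if (k : ℕ) < (i : ℕ) + 1 then a k else 0) =
      (if (k : ℕ) < (i : ℕ) then a k else 0) + (if (k : ℕ) = (i : ℕ) then a k else 0) := by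
    intro k; split_ifs <;> omega
  rw [Finset.sum_congr rfl (fun k _ => this k), Finset.sum_add_distrib, sum_ite_val]

lemma psum_zero (a : Fin n → ℕ) : psum a 0 = 0 := by
  unfold psum; simp

lemma colS_step (x : Fin n → Fin m → ℝ) (i : Fin n) (j : Fin m) :
    colS x (i : ℕ) j = (if 0 < (i : ℕ) then colS x ((i : ℕ) - 1) j else 0) + x i j := by
  by_cases h0 : 0 < (i : ℕ)
  · rw [if_pos h0]
    unfold colS
    have : ∀ k : Fin n, (if (k : ℕ) ≤ (i : ℕ) then x k j else 0) =
        (if (k : ℕ) ≤ (i : ℕ) - 1 then x k j else 0) + (if (k : ℕ) = (i : ℕ) then x k j else 0) := by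
      intro k; split_ifs <;> first | ring1 | (exfalso; omega)
    rw [Finset.sum_congr rfl (fun k _ => this k), Finset.sum_add_distrib, sum_ite_val]
  · rw [if_neg h0]
    unfold colS
    have : ∀ k : Fin n, (if (k : ℕ) ≤ (i : ℕ) then x k j else 0) =
        (if (k : ℕ) = (i : ℕ) then x k j else 0) := by
      intro k; exact if_congr (by omega) rfl rfl
    rw [Finset.sum_congr rfl (fun k _ => this k), sum_ite_val]; ring

lemma vval_step (a b : Fin n → ℕ) (x : Fin n → Fin m → ℝ) (i : Fin n) (j : Fin (m + 1)) :
    vval a b x (i : ℕ) j =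
      (if 0 < (i : ℕ) then vval a b x ((i : ℕ) - 1) j else 0)
      + ((if (j : ℕ) = 0 then (a i : ℝ) else 0) - (if (j : ℕ) = m then (b i : ℝ) else 0)
        - (if h : (j : ℕ) < m then x i ⟨j, h⟩ else 0)
        + (if h : 0 < (j : ℕ) then x i ⟨(j : ℕ) - 1, by have := j.isLt; omega⟩ else 0)) := by
  unfold vval
  by_cases h0 : 0 < (i : ℕ)
  · have hi1 : (i : ℕ) - 1 + 1 = (i : ℕ) := by omega
    have hA : (psum a ((i : ℕ) + 1) : ℝ) = (psum a ((i : ℕ) - 1 + 1) : ℝ) + (a i : ℝ) := by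
      rw [hi1, psum_step]; push_cast; ring
    have hB : (psum b ((i : ℕ) + 1) : ℝ) = (psum b ((i : ℕ) - 1 + 1) : ℝ) + (b i : ℝ) := by
      rw [hi1, psum_step]; push_cast; ring
    have hC : ∀ c : Fin m, colS x (i : ℕ) c = colS x ((i : ℕ) - 1) c + x i c := by
      intro c; rw [colS_step, if_pos h0]
    rw [if_pos h0]
    split_ifs <;> (try simp only [hA, hB, hC]) <;> ring
  · have hA : (psum a ((i : ℕ) + 1) : ℝ) = (a i : ℝ) := by
      rw [psum_step]
      have : (i : ℕ) = 0 := by omega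
      rw [this, psum_zero]; push_cast; ring
    have hB : (psum b ((i : ℕ) + 1) : ℝ) = (b i : ℝ) := by
      rw [psum_step]
      have : (i : ℕ) = 0 := by omega
      rw [this, psum_zero]; push_cast; ring
    have hC : ∀ c : Fin m, colS x (i : ℕ) c = x i c := by
      intro c; rw [colS_step, if_neg h0]; ring
    rw [if_neg h0]
    split_ifs <;> (try simp only [hA, hB, hC]) <;> ring

lemma vval_nonneg {a b : Fin n → ℕ} {x : Fin n → Fin m → ℝ} (hm : 0 < m)
    (hx : x ∈ PSpoly n m a b) (i : Fin n) (j : Fin (m + 1)) :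
    0 ≤ vval a b x (i : ℕ) j := by
  obtain ⟨hpos, hchain, hbot, htop⟩ := hx
  have hjlt := j.isLt
  unfold vval
  by_cases hj0 : (j : ℕ) = 0
  · have h1 : (j : ℕ) < m := by omega
    rw [if_pos hj0, if_neg (by omega), dif_pos h1, dif_neg (by omega)]
    have := htop i ⟨(j : ℕ), h1⟩ hj0
    unfold colS
    linarith
  · by_cases hjm : (j : ℕ) = m
    · have h1 : 0 < (j : ℕ) := by omega
      rw [if_neg hj0, if_pos hjm, dif_neg (by omega), dif_pos h1]
      have := hbot i ⟨(j : ℕ) - 1, by omega⟩ (by simp; omega)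
      unfold colS
      linarith
    · have h1 : (j : ℕ) < m := by omega
      have h2 : 0 < (j : ℕ) := by omega
      rw [if_neg hj0, if_neg hjm, dif_pos h1, dif_pos h2]
      have := hchain i ⟨(j : ℕ) - 1, by omega⟩ ⟨(j : ℕ), h1⟩ (by simp; omega)
      unfold colS
      linarith

lemma vval_telescope (a b : Fin n → ℕ) (x : Fin n → Fin m → ℝ) (k : ℕ) :
    ∑ j : Fin (m + 1), vval a b x k j = (psum a (k + 1) : ℝ) - (psum b (k + 1) : ℝ) := by
  unfold vval
  have P1 : ∑ j : Fin (m + 1), (if (j : ℕ) = 0 then (psum a (k + 1) : ℝ) else 0)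
      = (psum a (k + 1) : ℝ) := by
    rw [Fin.sum_univ_succ]
    simp
  have P2 : ∑ j : Fin (m + 1), (if (j : ℕ) = m then (psum b (k + 1) : ℝ) else 0)
      = (psum b (k + 1) : ℝ) := by
    rw [Fin.sum_univ_castSucc]
    rw [Finset.sum_eq_zero fun c _ => if_neg (by have := c.isLt; simp; omega)]
    simp
  have P3 : ∑ j : Fin (m + 1), (if h : (j : ℕ) < m then colS x k ⟨j, h⟩ else 0)
      = ∑ c : Fin m, colS x k c := by
    rw [Fin.sum_univ_castSucc]
    rw [dif_neg (by simp : ¬ ((Fin.last m : ℕ) < m))]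
    rw [add_zero]
    refine Finset.sum_congr rfl fun c _ => ?_
    rw [dif_pos (by simp : ((c.castSucc : Fin (m+1)) : ℕ) < m)]
    exact congrArg _ (Fin.ext (by simp))
  have P4 : ∑ j : Fin (m + 1), (if h : 0 < (j : ℕ) then
        colS x k ⟨(j : ℕ) - 1, by have := j.isLt; omega⟩ else 0)
      = ∑ c : Fin m, colS x k c := by
    rw [Fin.sum_univ_succ]
    rw [dif_neg (by simp)]
    rw [zero_add]
    refine Finset.sum_congr rfl fun c _ => ?_
    rw [dif_pos (by simp : 0 < ((c.succ : Fin (m+1)) : ℕ))]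
    exact congrArg _ (Fin.ext (by simp))
  rw [Finset.sum_add_distrib, Finset.sum_sub_distrib, Finset.sum_sub_distrib, P1, P2, P3, P4]
  ring

/-- The canonical flow associated to a matrix `x`. -/
noncomputable def gflow (a b : Fin n → ℕ) (x : Fin n → Fin m → ℝ) : Vtx n m → Vtx n m → ℝ
  | some (i, j), some (i', j') =>
      if i' = i ∧ (j' : ℕ) = (j : ℕ) + 1 then (if h : (j : ℕ) < m then x i ⟨j, h⟩ else 0)
      else if (i' : ℕ) = (i : ℕ) + 1 ∧ j' = j then vval a b x (i : ℕ) j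
      else 0
  | some (i, j), none => if (i : ℕ) = n - 1 then vval a b x (i : ℕ) j else 0
  | none, _ => 0

lemma sum_out (f : Vtx n m → Vtx n m → ℝ) (i : Fin n) (j : Fin (m + 1))
    (hz : ∀ v, ¬ IsEdge n m (some (i, j)) v → f (some (i, j)) v = 0) :
    ∑ v, f (some (i, j)) v =
      (if h : (j : ℕ) < m then f (some (i, j)) (some (i, ⟨(j : ℕ) + 1, by omega⟩)) else 0)
      + (if h : (i : ℕ) + 1 < n then f (some (i, j)) (some (⟨(i : ℕ) + 1, h⟩, j))
        else f (some (i, j)) none) := by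
  rw [Fintype.sum_option]
  by_cases hj : (j : ℕ) < m <;> by_cases hi : (i : ℕ) + 1 < n
  · rw [dif_pos hj, dif_pos hi]
    have h0 : f (some (i, j)) none = 0 := hz none (by simp only [IsEdge]; omega)
    set ph : Fin n × Fin (m + 1) := (i, ⟨(j : ℕ) + 1, by omega⟩) with hph
    set pv : Fin n × Fin (m + 1) := (⟨(i : ℕ) + 1, hi⟩, j) with hpv
    have hne : ph ≠ pv := by
      intro h
      have := congrArg (fun p => (p.1 : ℕ)) h
      simp [hph, hpv] at this
    have hsum : ∑ p : Fin n × Fin (m + 1), f (some (i, j)) (some p)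
        = ∑ p ∈ ({ph, pv} : Finset (Fin n × Fin (m + 1))), f (some (i, j)) (some p) := by
      refine (Finset.sum_subset (Finset.subset_univ _) fun p _ hp => ?_).symm
      obtain ⟨i', j'⟩ := p
      refine hz (some (i', j')) fun hE => hp ?_
      simp only [Finset.mem_insert, Finset.mem_singleton]
      rcases hE with ⟨h1, h2⟩ | ⟨h1, h2⟩
      · exact Or.inl (by subst h1; exact Prod.ext rfl (Fin.ext h2))
      · exact Or.inr (by subst h2; exact Prod.ext (Fin.ext h1) rfl)
    rw [hsum, Finset.sum_pair hne, h0, zero_add]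
  · rw [dif_pos hj, dif_neg hi]
    set ph : Fin n × Fin (m + 1) := (i, ⟨(j : ℕ) + 1, by omega⟩) with hph
    have hsum : ∑ p : Fin n × Fin (m + 1), f (some (i, j)) (some p)
        = f (some (i, j)) (some ph) := by
      refine Finset.sum_eq_single_of_mem ph (Finset.mem_univ _) fun p _ hp => ?_
      obtain ⟨i', j'⟩ := p
      refine hz (some (i', j')) fun hE => hp ?_
      rcases hE with ⟨h1, h2⟩ | ⟨h1, h2⟩
      · exact (by subst h1; exact Prod.ext rfl (Fin.ext h2))
      · exfalso; have := i'.isLt; omega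
    rw [hsum]; ring
  · rw [dif_neg hj, dif_pos hi]
    have h0 : f (some (i, j)) none = 0 := hz none (by simp only [IsEdge]; omega)
    set pv : Fin n × Fin (m + 1) := (⟨(i : ℕ) + 1, hi⟩, j) with hpv
    have hsum : ∑ p : Fin n × Fin (m + 1), f (some (i, j)) (some p)
        = f (some (i, j)) (some pv) := by
      refine Finset.sum_eq_single_of_mem pv (Finset.mem_univ _) fun p _ hp => ?_
      obtain ⟨i', j'⟩ := p
      refine hz (some (i', j')) fun hE => hp ?_
      rcases hE with ⟨h1, h2⟩ | ⟨h1, h2⟩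
      · exfalso; have := j'.isLt; have := j.isLt; omega
      · exact (by subst h2; exact Prod.ext (Fin.ext h1) rfl)
    rw [hsum, h0, zero_add]
  · rw [dif_neg hj, dif_neg hi]
    have hsum : ∑ p : Fin n × Fin (m + 1), f (some (i, j)) (some p) = 0 := by
      refine Finset.sum_eq_zero fun p _ => ?_
      obtain ⟨i', j'⟩ := p
      refine hz (some (i', j')) fun hE => ?_
      rcases hE with ⟨h1, h2⟩ | ⟨h1, h2⟩
      · have := j'.isLt; have := j.isLt; omega
      · have := i'.isLt; omega
    rw [hsum]; ring

lemma sum_in (f : Vtx n m → Vtx n m → ℝ) (i : Fin n) (j : Fin (m + 1))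
    (hz : ∀ v, ¬ IsEdge n m v (some (i, j)) → f v (some (i, j)) = 0) :
    ∑ v, f v (some (i, j)) =
      (if h : 0 < (j : ℕ) then
        f (some (i, ⟨(j : ℕ) - 1, by have := j.isLt; omega⟩)) (some (i, j)) else 0)
      + (if h : 0 < (i : ℕ) then
        f (some (⟨(i : ℕ) - 1, by have := i.isLt; omega⟩, j)) (some (i, j)) else 0) := by
  rw [Fintype.sum_option (fun v => f v (some (i, j)))]
  have h0 : f none (some (i, j)) = 0 := hz none (by simp [IsEdge])
  rw [h0, zero_add]
  by_cases hj : 0 < (j : ℕ) <;> by_cases hi : 0 < (i : ℕ)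
  · rw [dif_pos hj, dif_pos hi]
    set qh : Fin n × Fin (m + 1) := (i, ⟨(j : ℕ) - 1, by have := j.isLt; omega⟩) with hqh
    set qv : Fin n × Fin (m + 1) := (⟨(i : ℕ) - 1, by have := i.isLt; omega⟩, j) with hqv
    have hne : qh ≠ qv := by
      intro h
      have := congrArg (fun p => (p.1 : ℕ)) h
      simp [hqh, hqv] at this
      omega
    have hsum : ∑ p : Fin n × Fin (m + 1), f (some p) (some (i, j))
        = ∑ p ∈ ({qh, qv} : Finset (Fin n × Fin (m + 1))), f (some p) (some (i, j)) := by
      refine (Finset.sum_subset (Finset.subset_univ _) fun p _ hp => ?_).symm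
      obtain ⟨i', j'⟩ := p
      refine hz (some (i', j')) fun hE => hp ?_
      simp only [Finset.mem_insert, Finset.mem_singleton]
      rcases hE with ⟨h1, h2⟩ | ⟨h1, h2⟩
      · exact Or.inl (by subst h1; rw [hqh]; exact congrArg _ (Fin.ext (show (j' : ℕ) = (j : ℕ) - 1 by omega)))
      · exact Or.inr (by rw [hqv, ← h2]; exact congrArg (fun t => (t, j')) (Fin.ext (show (i' : ℕ) = (i : ℕ) - 1 by omega)))
    rw [hsum, Finset.sum_pair hne]
  · rw [dif_pos hj, dif_neg hi]
    set qh : Fin n × Fin (m + 1) := (i, ⟨(j : ℕ) - 1, by have := j.isLt; omega⟩) with hqh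
    have hsum : ∑ p : Fin n × Fin (m + 1), f (some p) (some (i, j))
        = f (some qh) (some (i, j)) := by
      refine Finset.sum_eq_single_of_mem qh (Finset.mem_univ _) fun p _ hp => ?_
      obtain ⟨i', j'⟩ := p
      refine hz (some (i', j')) fun hE => hp ?_
      rcases hE with ⟨h1, h2⟩ | ⟨h1, h2⟩
      · exact (by subst h1; rw [hqh]; exact congrArg _ (Fin.ext (show (j' : ℕ) = (j : ℕ) - 1 by omega)))
      · exfalso; omega
    rw [hsum]; ring
  · rw [dif_neg hj, dif_pos hi]
    set qv : Fin n × Fin (m + 1) := (⟨(i : ℕ) - 1, by have := i.isLt; omega⟩, j) with hqv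
    have hsum : ∑ p : Fin n × Fin (m + 1), f (some p) (some (i, j))
        = f (some qv) (some (i, j)) := by
      refine Finset.sum_eq_single_of_mem qv (Finset.mem_univ _) fun p _ hp => ?_
      obtain ⟨i', j'⟩ := p
      refine hz (some (i', j')) fun hE => hp ?_
      rcases hE with ⟨h1, h2⟩ | ⟨h1, h2⟩
      · exfalso; omega
      · exact (by rw [hqv, ← h2]; exact congrArg (fun t => (t, j')) (Fin.ext (show (i' : ℕ) = (i : ℕ) - 1 by omega)))
    rw [hsum]; ring
  · rw [dif_neg hj, dif_neg hi]
    have hsum : ∑ p : Fin n × Fin (m + 1), f (some p) (some (i, j)) = 0 := by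
      refine Finset.sum_eq_zero fun p _ => ?_
      obtain ⟨i', j'⟩ := p
      refine hz (some (i', j')) fun hE => ?_
      rcases hE with ⟨h1, h2⟩ | ⟨h1, h2⟩
      · omega
      · omega
    rw [hsum]; ring

lemma sum_out_none (f : Vtx n m → Vtx n m → ℝ)
    (hz : ∀ v, ¬ IsEdge n m none v → f none v = 0) :
    ∑ v, f none v = 0 :=
  Finset.sum_eq_zero fun v _ => hz v (by simp [IsEdge])

lemma sum_in_none (f : Vtx n m → Vtx n m → ℝ) (hn : 0 < n)
    (hz : ∀ v, ¬ IsEdge n m v none → f v none = 0) :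
    ∑ v, f v none = ∑ j : Fin (m + 1), f (some (⟨n - 1, by omega⟩, j)) none := by
  rw [Fintype.sum_option (fun v => f v none)]
  have h0 : f none none = 0 := hz none (by simp [IsEdge])
  rw [h0, zero_add, Fintype.sum_prod_type]
  refine Finset.sum_eq_single_of_mem (⟨n - 1, by omega⟩ : Fin n) (Finset.mem_univ _) fun i' _ hp => ?_
  refine Finset.sum_eq_zero fun j' _ => ?_
  refine hz (some (i', j')) fun hE => ?_
  simp only [IsEdge] at hE
  exact hp (Fin.ext hE)

variable {a b : Fin n → ℕ} {x : Fin n → Fin m → ℝ}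

lemma vval_eq_mid (k : ℕ) (J : Fin (m + 1)) (c d : Fin m)
    (h1 : (c : ℕ) = (J : ℕ) - 1) (h2 : (d : ℕ) = (J : ℕ)) (h0 : 0 < (J : ℕ)) :
    vval a b x k J = colS x k c - colS x k d := by
  have hd := d.isLt
  unfold vval
  rw [if_neg (by omega), if_neg (by omega), dif_pos (show (J : ℕ) < m by omega), dif_pos h0]
  have e1 : ∀ p : ((J : ℕ) - 1 < m), (⟨(J : ℕ) - 1, p⟩ : Fin m) = c := fun p => Fin.ext h1.symm
  have e2 : ∀ p : ((J : ℕ) < m), (⟨(J : ℕ), p⟩ : Fin m) = d := fun p => Fin.ext h2.symm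
  rw [e1, e2]; ring

lemma vval_eq_first (k : ℕ) (J : Fin (m + 1)) (d : Fin m)
    (h2 : (d : ℕ) = (J : ℕ)) (h0 : (J : ℕ) = 0) (hm : 0 < m) :
    vval a b x k J = (psum a (k + 1) : ℝ) - colS x k d := by
  unfold vval
  rw [if_pos h0, if_neg (by omega), dif_pos (show (J : ℕ) < m by omega), dif_neg (by omega)]
  have e2 : ∀ p : ((J : ℕ) < m), (⟨(J : ℕ), p⟩ : Fin m) = d := fun p => Fin.ext h2.symm
  rw [e2]; ring

lemma vval_eq_last (k : ℕ) (J : Fin (m + 1)) (c : Fin m)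
    (h1 : (c : ℕ) = (J : ℕ) - 1) (h0 : (J : ℕ) = m) (hm : 0 < m) :
    vval a b x k J = colS x k c - (psum b (k + 1) : ℝ) := by
  unfold vval
  rw [if_neg (by omega), if_pos h0, dif_neg (by omega), dif_pos (by omega)]
  have e1 : ∀ p : ((J : ℕ) - 1 < m), (⟨(J : ℕ) - 1, p⟩ : Fin m) = c := fun p => Fin.ext h1.symm
  rw [e1]; ring

lemma PS_of_vval (hm : 0 < m)
    (hpos : ∀ i j, 0 ≤ x i j)
    (h : ∀ (i : Fin n) (j : Fin (m + 1)), 0 ≤ vval a b x (i : ℕ) j) :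
    x ∈ PSpoly n m a b := by
  refine ⟨hpos, ?_, ?_, ?_⟩
  · intro i j j' hjj
    have hlt := j'.isLt
    have H := h i ⟨(j' : ℕ), by omega⟩
    rw [vval_eq_mid (i : ℕ) _ j j' (by simp; omega) (by simp) (by simp; omega)] at H
    show colS x (i : ℕ) j' ≤ colS x (i : ℕ) j
    linarith
  · intro i j hj
    have H := h i ⟨m, by omega⟩
    rw [vval_eq_last (i : ℕ) _ j (by simp; omega) (by simp) hm] at H
    show (psum b ((i : ℕ) + 1) : ℝ) ≤ colS x (i : ℕ) j
    linarith
  · intro i j hj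
    have H := h i ⟨0, by omega⟩
    rw [vval_eq_first (i : ℕ) _ j (by simp; omega) (by simp) hm] at H
    show colS x (i : ℕ) j ≤ (psum a ((i : ℕ) + 1) : ℝ)
    linarith

/-- The vertical out-flow expression at `(i, j)`. -/
noncomputable def voutE (f : Vtx n m → Vtx n m → ℝ) (i : Fin n) (j : Fin (m + 1)) : ℝ :=
  if h : (i : ℕ) + 1 < n then f (some (i, j)) (some (⟨(i : ℕ) + 1, h⟩, j))
  else f (some (i, j)) none

lemma voutE_nonneg {f : Vtx n m → Vtx n m → ℝ} (hpos : ∀ u v, 0 ≤ f u v)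
    (i : Fin n) (j : Fin (m + 1)) : 0 ≤ voutE f i j := by
  unfold voutE; split_ifs <;> apply hpos

lemma cons_step {f : Vtx n m → Vtx n m → ℝ} (hf : f ∈ FlowPolytope n m a b)
    (i : Fin n) (j : Fin (m + 1)) :
    voutE f i j =
      (if h : 0 < (i : ℕ) then voutE f ⟨(i : ℕ) - 1, by have := i.isLt; omega⟩ j else 0)
      + ((if (j : ℕ) = 0 then (a i : ℝ) else 0) - (if (j : ℕ) = m then (b i : ℝ) else 0)
        - (if h : (j : ℕ) < m then Phi n m f i ⟨j, h⟩ else 0)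
        + (if h : 0 < (j : ℕ) then Phi n m f i ⟨(j : ℕ) - 1, by have := j.isLt; omega⟩ else 0)) := by
  obtain ⟨hzf, hpos, hcons⟩ := hf
  have hc := hcons (some (i, j))
  rw [sum_out f i j (fun v hv => hzf _ v hv), sum_in f i j (fun v hv => hzf v _ hv)] at hc
  have EH : (if h : (j : ℕ) < m then
        f (some (i, j)) (some (i, ⟨(j : ℕ) + 1, by omega⟩)) else 0)
      = (if h : (j : ℕ) < m then Phi n m f i ⟨j, h⟩ else 0) := by
    split_ifs with h
    · show _ = f (some (i, ((⟨(j : ℕ), h⟩ : Fin m)).castSucc)) (some (i, ((⟨(j : ℕ), h⟩ : Fin m)).succ))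
      have e1 : ((⟨(j : ℕ), h⟩ : Fin m)).castSucc = j := Fin.ext (by simp)
      have e2 : ((⟨(j : ℕ), h⟩ : Fin m)).succ = (⟨(j : ℕ) + 1, by omega⟩ : Fin (m + 1)) :=
        Fin.ext (by simp)
      rw [e1, e2]
    · rfl
  have EH' : (if h : 0 < (j : ℕ) then
        f (some (i, ⟨(j : ℕ) - 1, by have := j.isLt; omega⟩)) (some (i, j)) else 0)
      = (if h : 0 < (j : ℕ) then Phi n m f i ⟨(j : ℕ) - 1, by have := j.isLt; omega⟩ else 0) := by
    split_ifs with h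
    · have hlt : (j : ℕ) - 1 < m := by have := j.isLt; omega
      show _ = f (some (i, ((⟨(j : ℕ) - 1, hlt⟩ : Fin m)).castSucc))
          (some (i, ((⟨(j : ℕ) - 1, hlt⟩ : Fin m)).succ))
      have e1 : ((⟨(j : ℕ) - 1, hlt⟩ : Fin m)).castSucc
          = (⟨(j : ℕ) - 1, by have := j.isLt; omega⟩ : Fin (m + 1)) := Fin.ext (by simp)
      have e2 : ((⟨(j : ℕ) - 1, hlt⟩ : Fin m)).succ = j := Fin.ext (by simp; omega)
      rw [e1, e2]
    · rfl
  have EV : (if h : 0 < (i : ℕ) then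
        f (some (⟨(i : ℕ) - 1, by have := i.isLt; omega⟩, j)) (some (i, j)) else 0)
      = (if h : 0 < (i : ℕ) then
          voutE f ⟨(i : ℕ) - 1, by have := i.isLt; omega⟩ j else 0) := by
    split_ifs with h
    · unfold voutE
      rw [dif_pos (show ((⟨(i : ℕ) - 1, by have := i.isLt; omega⟩ : Fin n) : ℕ) + 1 < n by
        simp; omega)]
      have e : ∀ p : ((((⟨(i : ℕ) - 1, by have := i.isLt; omega⟩ : Fin n)) : ℕ) + 1 < n),
          (⟨(((⟨(i : ℕ) - 1, by have := i.isLt; omega⟩ : Fin n)) : ℕ) + 1, p⟩ : Fin n) = i :=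
        fun p => Fin.ext (by simp; omega)
      rw [e]
    · rfl
  rw [EH, EH', EV] at hc
  have hnet : netflow n m a b (some (i, j))
      = (if (j : ℕ) = 0 then (a i : ℝ) else 0) - (if (j : ℕ) = m then (b i : ℝ) else 0) := rfl
  rw [hnet] at hc
  unfold voutE
  unfold voutE at hc
  linarith

lemma vout_eq {f : Vtx n m → Vtx n m → ℝ} (hf : f ∈ FlowPolytope n m a b) :
    ∀ (N : ℕ) (i : Fin n), (i : ℕ) = N → ∀ j : Fin (m + 1),
      voutE f i j = vval a b (Phi n m f) (i : ℕ) j := by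
  intro N
  induction N with
  | zero =>
    intro i hi j
    rw [cons_step hf i j, vval_step a b (Phi n m f) i j,
      dif_neg (show ¬ 0 < (i : ℕ) by omega), if_neg (show ¬ 0 < (i : ℕ) by omega)]
  | succ N ih =>
    intro i hi j
    have h0 : 0 < (i : ℕ) := by omega
    rw [cons_step hf i j, vval_step a b (Phi n m f) i j, dif_pos h0, if_pos h0,
      ih ⟨(i : ℕ) - 1, by have := i.isLt; omega⟩ (by simp; omega) j]

lemma gflow_pair (i i' : Fin n) (j j' : Fin (m + 1)) :
    gflow a b x (some (i, j)) (some (i', j')) =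
      if i' = i ∧ (j' : ℕ) = (j : ℕ) + 1 then (if h : (j : ℕ) < m then x i ⟨(j : ℕ), h⟩ else 0)
      else if (i' : ℕ) = (i : ℕ) + 1 ∧ j' = j then vval a b x (i : ℕ) j
      else 0 := rfl

lemma gflow_snone (i : Fin n) (j : Fin (m + 1)) :
    gflow a b x (some (i, j)) none
      = if (i : ℕ) = n - 1 then vval a b x (i : ℕ) j else 0 := rfl

lemma gflow_none (v : Vtx n m) : gflow a b x none v = 0 := rfl

lemma gflow_zero (a b : Fin n → ℕ) (x : Fin n → Fin m → ℝ) :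
    ∀ u v, ¬ IsEdge n m u v → gflow a b x u v = 0 := by
  intro u v h
  match u, v with
  | some (i, j), some (i', j') =>
    simp only [IsEdge] at h
    push_neg at h
    rw [gflow_pair, if_neg (fun hc => (h.1 hc.1.symm) hc.2),
      if_neg (fun hc => (h.2 hc.1) hc.2.symm)]
  | some (i, j), none =>
    simp only [IsEdge] at h
    rw [gflow_snone, if_neg h]
  | none, v => rw [gflow_none]

lemma gflow_nonneg (hm : 0 < m) (hx : x ∈ PSpoly n m a b) :
    ∀ u v, 0 ≤ gflow a b x u v := by
  intro u v
  match u, v with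
  | some (i, j), some (i', j') =>
    rw [gflow_pair]
    split_ifs
    · exact hx.1 _ _
    · exact le_refl 0
    · exact vval_nonneg hm hx i j
    · exact le_refl 0
  | some (i, j), none =>
    rw [gflow_snone]
    split_ifs
    · exact vval_nonneg hm hx i j
    · exact le_refl 0
  | none, v => rw [gflow_none]

lemma gflow_hout (i : Fin n) (j : Fin (m + 1)) (h : (j : ℕ) < m) (p : (j : ℕ) + 1 < m + 1) :
    gflow a b x (some (i, j)) (some (i, ⟨(j : ℕ) + 1, p⟩)) = x i ⟨(j : ℕ), h⟩ := by
  have hc : i = i ∧ ((⟨(j : ℕ) + 1, p⟩ : Fin (m + 1)) : ℕ) = (j : ℕ) + 1 := ⟨rfl, rfl⟩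
  rw [gflow_pair, if_pos hc, dif_pos h]

lemma gflow_vout_lt (i : Fin n) (j : Fin (m + 1)) (p : (i : ℕ) + 1 < n) :
    gflow a b x (some (i, j)) (some (⟨(i : ℕ) + 1, p⟩, j)) = vval a b x (i : ℕ) j := by
  have hc1 : ¬((⟨(i : ℕ) + 1, p⟩ : Fin n) = i ∧ (j : ℕ) = (j : ℕ) + 1) := by
    rintro ⟨-, h2⟩; omega
  have hc2 : ((⟨(i : ℕ) + 1, p⟩ : Fin n) : ℕ) = (i : ℕ) + 1 ∧ j = j := ⟨rfl, rfl⟩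
  rw [gflow_pair, if_neg hc1, if_pos hc2]

lemma gflow_vout_last (i : Fin n) (j : Fin (m + 1)) (p : (i : ℕ) = n - 1) :
    gflow a b x (some (i, j)) none = vval a b x (i : ℕ) j := by
  rw [gflow_snone, if_pos p]

lemma psum_all (a : Fin n → ℕ) : psum a n = ∑ i : Fin n, a i := by
  unfold psum
  exact Finset.sum_congr rfl fun k _ => if_pos k.isLt

lemma gflow_mem (hn : 0 < n) (hm : 0 < m) (hx : x ∈ PSpoly n m a b) :
    gflow a b x ∈ FlowPolytope n m a b := by
  refine ⟨gflow_zero a b x, gflow_nonneg hm hx, ?_⟩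
  intro u
  match u with
  | some (i, j) =>
    rw [sum_out (gflow a b x) i j (fun v hv => gflow_zero a b x _ v hv),
      sum_in (gflow a b x) i j (fun v hv => gflow_zero a b x v _ hv)]
    have E1 : (if h : (j : ℕ) < m then
          gflow a b x (some (i, j)) (some (i, ⟨(j : ℕ) + 1, by omega⟩)) else 0)
        = (if h : (j : ℕ) < m then x i ⟨(j : ℕ), h⟩ else 0) := by
      split_ifs with h
      · exact gflow_hout i j h (by omega)
      · rfl
    have E2 : (if h : (i : ℕ) + 1 < n then
          gflow a b x (some (i, j)) (some (⟨(i : ℕ) + 1, h⟩, j))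
          else gflow a b x (some (i, j)) none)
        = vval a b x (i : ℕ) j := by
      split_ifs with h
      · exact gflow_vout_lt i j h
      · exact gflow_vout_last i j (by have := i.isLt; omega)
    have E3 : (if h : 0 < (j : ℕ) then
          gflow a b x (some (i, ⟨(j : ℕ) - 1, by have := j.isLt; omega⟩)) (some (i, j)) else 0)
        = (if h : 0 < (j : ℕ) then x i ⟨(j : ℕ) - 1, by have := j.isLt; omega⟩ else 0) := by
      split_ifs with h
      · have hc : i = i ∧ (j : ℕ) = (j : ℕ) - 1 + 1 := ⟨rfl, by omega⟩
        have hd : (j : ℕ) - 1 < m := by have := j.isLt; omega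
        rw [gflow_pair, if_pos hc, dif_pos hd]
      · rfl
    have E4 : (if h : 0 < (i : ℕ) then
          gflow a b x (some (⟨(i : ℕ) - 1, by have := i.isLt; omega⟩, j)) (some (i, j)) else 0)
        = (if 0 < (i : ℕ) then vval a b x ((i : ℕ) - 1) j else 0) := by
      split_ifs with h
      · have hc1 : ¬(i = (⟨(i : ℕ) - 1, by have := i.isLt; omega⟩ : Fin n)
            ∧ (j : ℕ) = (j : ℕ) + 1) := by rintro ⟨-, h2⟩; omega
        have hc2 : (i : ℕ) = (i : ℕ) - 1 + 1 ∧ j = j := ⟨by omega, rfl⟩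
        rw [gflow_pair, if_neg hc1, if_pos hc2]
      · rfl
    rw [E1, E2, E3, E4, vval_step a b x i j]
    have hnet : netflow n m a b (some (i, j))
        = (if (j : ℕ) = 0 then (a i : ℝ) else 0) - (if (j : ℕ) = m then (b i : ℝ) else 0) := rfl
    rw [hnet]
    ring
  | none =>
    rw [sum_out_none (gflow a b x) (fun v hv => gflow_zero a b x _ v hv),
      sum_in_none (gflow a b x) hn (fun v hv => gflow_zero a b x v _ hv)]
    have E : ∀ j : Fin (m + 1),
        gflow a b x (some (⟨n - 1, by omega⟩, j)) none
          = vval a b x (((⟨n - 1, by omega⟩ : Fin n)) : ℕ) j := by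
      intro j
      exact gflow_vout_last _ j rfl
    rw [Finset.sum_congr rfl fun j _ => E j, vval_telescope]
    have hnet : netflow n m a b none = -∑ i : Fin n, ((a i : ℝ) - (b i : ℝ)) := rfl
    rw [hnet]
    have h1 : (((⟨n - 1, by omega⟩ : Fin n)) : ℕ) + 1 = n := by simp; omega
    rw [h1, psum_all, psum_all]
    rw [Finset.sum_sub_distrib]
    push_cast
    ring

lemma Phi_gflow : Phi n m (gflow a b x) = x := by
  funext i c
  show gflow a b x (some (i, c.castSucc)) (some (i, c.succ)) = x i c
  have hc : i = i ∧ ((c.succ : Fin (m + 1)) : ℕ) = ((c.castSucc : Fin (m + 1)) : ℕ) + 1 :=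
    ⟨rfl, by simp⟩
  have hd : ((c.castSucc : Fin (m + 1)) : ℕ) < m := by simp
  rw [gflow_pair, if_pos hc, dif_pos hd]
  exact congrArg _ (Fin.ext (by simp))

lemma flow_eq_gflow {f : Vtx n m → Vtx n m → ℝ} (hf : f ∈ FlowPolytope n m a b) :
    f = gflow a b (Phi n m f) := by
  have hzf := hf.1
  funext u v
  match u, v with
  | none, v =>
    rw [hzf none v (by simp [IsEdge]), gflow_none]
  | some (i, j), some (i', j') =>
    by_cases hH : i' = i ∧ (j' : ℕ) = (j : ℕ) + 1
    · have hjm : (j : ℕ) < m := by have := j'.isLt; omega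
      simp only [gflow]
      rw [if_pos hH, dif_pos hjm]
      show f (some (i, j)) (some (i', j')) = Phi n m f i ⟨(j : ℕ), hjm⟩
      rw [hH.1]
      show f (some (i, j)) (some (i, j'))
        = f (some (i, ((⟨(j : ℕ), hjm⟩ : Fin m)).castSucc)) (some (i, ((⟨(j : ℕ), hjm⟩ : Fin m)).succ))
      have e1 : ((⟨(j : ℕ), hjm⟩ : Fin m)).castSucc = j := Fin.ext (by simp)
      have e2 : ((⟨(j : ℕ), hjm⟩ : Fin m)).succ = j' := Fin.ext (by simp [hH.2])
      rw [e1, e2]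
    · by_cases hV : (i' : ℕ) = (i : ℕ) + 1 ∧ j' = j
      · have hin : (i : ℕ) + 1 < n := by have := i'.isLt; omega
        simp only [gflow]
        rw [if_neg hH, if_pos hV, ← vout_eq hf (i : ℕ) i rfl j]
        unfold voutE
        rw [dif_pos hin]
        rw [hV.2, show i' = (⟨(i : ℕ) + 1, hin⟩ : Fin n) from Fin.ext hV.1]
      · rw [hzf _ _ (by simp only [IsEdge]; tauto), gflow_pair, if_neg hH, if_neg hV]
  | some (i, j), none =>
    by_cases hI : (i : ℕ) = n - 1
    · rw [gflow_snone, if_pos hI, ← vout_eq hf (i : ℕ) i rfl j]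
      unfold voutE
      rw [dif_neg (by have := i.isLt; omega)]
    · rw [hzf _ _ (by simp only [IsEdge]; exact hI), gflow_snone, if_neg hI]

lemma Phi_mem {f : Vtx n m → Vtx n m → ℝ} (hm : 0 < m) (hf : f ∈ FlowPolytope n m a b) :
    Phi n m f ∈ PSpoly n m a b := by
  refine PS_of_vval hm (fun i c => hf.2.1 _ _) (fun i j => ?_)
  rw [← vout_eq hf (i : ℕ) i rfl j]
  exact voutE_nonneg hf.2.1 i j

lemma gflow_int (hx : ∀ i j, ∃ z : ℤ, x i j = z) : IsIntegerFlow (gflow a b x) := by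
  choose z hz using hx
  have hcol : ∀ k c, ∃ w : ℤ, colS x k c = (w : ℝ) := by
    intro k c
    refine ⟨∑ i : Fin n, if (i : ℕ) ≤ k then z i c else 0, ?_⟩
    unfold colS
    push_cast
    exact Finset.sum_congr rfl fun i _ => by split_ifs <;> simp [hz]
  have hvv : ∀ k (j : Fin (m + 1)), ∃ w : ℤ, vval a b x k j = (w : ℝ) := by
    intro k j
    obtain ⟨wC, hC⟩ : ∃ w : ℤ, (if h : (j : ℕ) < m then colS x k ⟨(j : ℕ), h⟩ else 0) = (w : ℝ) := by
      split_ifs with h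
      exacts [hcol k _, ⟨0, by simp⟩]
    obtain ⟨wD, hD⟩ : ∃ w : ℤ, (if h : 0 < (j : ℕ) then
        colS x k ⟨(j : ℕ) - 1, by have := j.isLt; omega⟩ else 0) = (w : ℝ) := by
      split_ifs with h
      exacts [hcol k _, ⟨0, by simp⟩]
    refine ⟨(if (j : ℕ) = 0 then (psum a (k + 1) : ℤ) else 0)
      - (if (j : ℕ) = m then (psum b (k + 1) : ℤ) else 0) - wC + wD, ?_⟩
    unfold vval
    rw [hC, hD]
    split_ifs <;> push_cast <;> ring
  intro u v
  match u, v with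
  | some (i, j), some (i', j') =>
    rw [gflow_pair]
    split_ifs
    · exact ⟨z i _, hz i _⟩
    · exact ⟨0, by simp⟩
    · exact hvv _ _
    · exact ⟨0, by simp⟩
  | some (i, j), none =>
    rw [gflow_snone]
    split_ifs
    · exact hvv _ _
    · exact ⟨0, by simp⟩
  | none, v => exact ⟨0, by rw [gflow_none]; simp⟩

end Aux

/-- `PS_n^m(a,b)` is integrally equivalent to `F_{G(n,m)}(a,b)`:
`Φ` is a bijection from the flow polytope onto the Pitman–Stanley polytope which
restricts to a bijection between integer flows and integer points. -/
theorem statement0 (n m : ℕ) (hn : 0 < n) (hm : 0 < m) (a b : Fin n → ℕ) :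
    Set.BijOn (Phi n m) (FlowPolytope n m a b) (PSpoly n m a b) ∧
    Set.BijOn (Phi n m)
      { f | f ∈ FlowPolytope n m a b ∧ IsIntegerFlow f }
      { x | x ∈ PSpoly n m a b ∧ ∀ i j, ∃ z : ℤ, x i j = z } := by
  constructor
  · refine ⟨fun f hf => Phi_mem hm hf, fun f hf g hg hfg => ?_, fun x hx => ?_⟩
    · rw [flow_eq_gflow hf, flow_eq_gflow hg, hfg]
    · exact ⟨gflow a b x, gflow_mem hn hm hx, Phi_gflow⟩
  · refine ⟨fun f hf => ⟨Phi_mem hm hf.1, fun i j => hf.2 _ _⟩,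
      fun f hf g hg hfg => ?_, fun x hx => ?_⟩
    · rw [flow_eq_gflow hf.1, flow_eq_gflow hg.1, hfg]
    · exact ⟨gflow a b x, ⟨gflow_mem hn hm hx.1, gflow_int hx.2⟩, Phi_gflow⟩


end GPS
end

section
/- Let G be a finite connected directed acyclic graph on vertex set {1,…,N+1} such that every edge (i,j) satisfies i < j and N+1 is the unique sink, and let c = (c_1,…,c_N,−∑_{i=1}^N c_i) be an integer netflow vector. Suppose F and F′ are forests of edges of G, each of which is the support of some flow in F_G(c), that F′ ⊆ F, and that every vertex incident to an edge of F is incident to an edge of F′. Then F′ = F. -/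
open scoped BigOperators Classical

namespace GPS

/-- If `F' ⊆ F` are both `c`-valid forests of `G` and every
vertex incident to an edge of `F` is incident to an edge of `F'`, then `F' = F`. -/
theorem statement4 (N : ℕ) (E : Fin (N + 1) → Fin (N + 1) → Prop)
    (hE : ∀ u v, E u v → u < v)
    (hconn : (SimpleGraph.fromRel E).Connected)
    (hsink : ∀ u : Fin (N + 1), u ≠ Fin.last N → ∃ v, E u v)
    (c : Fin (N + 1) → ℤ) (hc : ∑ u, c u = 0)
    (F F' : Fin (N + 1) → Fin (N + 1) → Prop)
    (hFE : ∀ u v, F u v → E u v)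
    (hsub : ∀ u v, F' u v → F u v)
    (hforestF : (SimpleGraph.fromRel F).IsAcyclic)
    (hforestF' : (SimpleGraph.fromRel F').IsAcyclic)
    (hvalidF : ∃ f ∈ FlowPolyGen N E c, ∀ u v, F u v ↔ f u v ≠ 0)
    (hvalidF' : ∃ f ∈ FlowPolyGen N E c, ∀ u v, F' u v ↔ f u v ≠ 0)
    (hvtx : ∀ w : Fin (N + 1), (∃ u, F w u ∨ F u w) → ∃ u, F' w u ∨ F' u w) :
    ∀ u v, F' u v ↔ F u v := by
  classical
  obtain ⟨f, ⟨hfE, hfpos, hfdiv⟩, hFf⟩ := hvalidF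
  obtain ⟨f', ⟨hf'E, hf'pos, hf'div⟩, hF'f'⟩ := hvalidF'
  set g : Fin (N+1) → Fin (N+1) → ℝ := fun x y => f x y - f' x y with hg
  have hgF : ∀ x y, g x y ≠ 0 → F x y := by
    intro x y h
    by_cases hx : f x y = 0
    · have h' : f' x y ≠ 0 := by
        intro h0; apply h; simp [hg, hx, h0]
      exact hsub _ _ ((hF'f' x y).2 h')
    · exact (hFf x y).2 hx
  have hglt : ∀ x y, g x y ≠ 0 → x < y := fun x y h => hE _ _ (hFE _ _ (hgF _ _ h))
  have hgdiv : ∀ x, (∑ y, g x y) - (∑ y, g y x) = 0 := by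
    intro x
    have h1 := hfdiv x
    have h2 := hf'div x
    simp only [hg, Finset.sum_sub_distrib]
    linarith
  intro u v
  refine ⟨hsub u v, fun hFuv => ?_⟩
  by_contra hF'uv
  have hguv : g u v ≠ 0 := by
    have h1 : f u v ≠ 0 := (hFf u v).1 hFuv
    have h2 : f' u v = 0 := by
      by_contra h; exact hF'uv ((hF'f' u v).2 h)
    simpa [hg, h2] using h1
  have huv : u < v := hglt _ _ hguv
  set S : SimpleGraph (Fin (N+1)) := SimpleGraph.fromRel (fun x y => g x y ≠ 0) with hS
  have hSle : S ≤ SimpleGraph.fromRel F := by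
    intro x y hxy
    obtain ⟨hne, h | h⟩ := hxy
    · exact ⟨hne, Or.inl (hgF _ _ h)⟩
    · exact ⟨hne, Or.inr (hgF _ _ h)⟩
  have hSac : S.IsAcyclic := by
    intro x cyc hcyc
    exact hforestF (cyc.mapLe hSle) (hcyc.mapLe hSle)
  have hSadj : S.Adj u v := ⟨Fin.ne_of_lt huv, Or.inl hguv⟩
  have hbridge := (SimpleGraph.isAcyclic_iff_forall_adj_isBridge.mp hSac) hSadj
  rw [SimpleGraph.isBridge_iff] at hbridge
  set G' : SimpleGraph (Fin (N+1)) := S \ SimpleGraph.fromEdgeSet {s(u,v)} with hG'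
  have hnotreach : ¬ G'.Reachable u v := hbridge
  set T : Finset (Fin (N+1)) := Finset.univ.filter (fun x => G'.Reachable u x) with hT
  have huT : u ∈ T := by
    simp only [hT, Finset.mem_filter, Finset.mem_univ, true_and]
    exact SimpleGraph.Reachable.refl u
  have hvT : v ∉ T := by simpa [hT] using hnotreach
  -- a nonzero g-edge not equal to (u,v) survives in G'
  have hadj : ∀ x y, g x y ≠ 0 → ¬ (x = u ∧ y = v) → G'.Adj x y := by
    intro x y h hne
    have hxy : x < y := hglt _ _ h
    refine ⟨⟨Fin.ne_of_lt hxy, Or.inl h⟩, ?_⟩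
    simp only [SimpleGraph.fromEdgeSet_adj, Set.mem_singleton_iff]
    rintro ⟨he, -⟩
    rcases Sym2.eq_iff.mp he with ⟨rfl, rfl⟩ | ⟨rfl, rfl⟩
    · exact hne ⟨rfl, rfl⟩
    · exact absurd hxy (not_lt.mpr huv.le)
  have hstep : ∀ x ∈ T, ∀ y, G'.Adj x y → y ∈ T := by
    intro x hx y hxy
    simp only [hT, Finset.mem_filter, Finset.mem_univ, true_and] at hx ⊢
    exact hx.trans hxy.reachable
  have hcross1 : ∀ x ∈ T, ∀ y, y ∉ T → g x y = if x = u ∧ y = v then g u v else 0 := by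
    intro x hx y hy
    split_ifs with h
    · rw [h.1, h.2]
    · by_contra hne
      exact hy (hstep x hx y (hadj x y hne h))
  have hcross2 : ∀ x ∈ T, ∀ y, y ∉ T → g y x = 0 := by
    intro x hx y hy
    by_contra hne
    by_cases h : y = u ∧ x = v
    · exact hvT (h.2 ▸ hx)
    · exact hy (hstep x hx y (hadj y x hne h).symm)
  have hzero : ∑ x ∈ T, ((∑ y, g x y) - (∑ y, g y x)) = 0 :=
    Finset.sum_eq_zero fun x _ => hgdiv x
  have hsplit : ∀ h : Fin (N+1) → Fin (N+1) → ℝ, ∀ x : Fin (N+1),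
      (∑ y, h x y) = (∑ y ∈ T, h x y) + (∑ y ∈ Tᶜ, h x y) :=
    fun h x => (Finset.sum_add_sum_compl T _).symm
  have hB' : ∑ x ∈ T, ∑ y ∈ Tᶜ, g y x = 0 := by
    refine Finset.sum_eq_zero fun x hx => Finset.sum_eq_zero fun y hy => ?_
    exact hcross2 x hx y (Finset.mem_compl.mp hy)
  have hB : ∑ x ∈ T, ∑ y ∈ Tᶜ, g x y = g u v := by
    have inner : ∀ x ∈ T, ∑ y ∈ Tᶜ, g x y = if x = u then g u v else 0 := by
      intro x hx
      split_ifs with hxu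
      · rw [hxu]
        rw [Finset.sum_eq_single_of_mem v (Finset.mem_compl.mpr hvT)]
        intro y hy hyv
        rw [hcross1 u huT y (Finset.mem_compl.mp hy)]
        simp [hyv]
      · refine Finset.sum_eq_zero fun y hy => ?_
        rw [hcross1 x hx y (Finset.mem_compl.mp hy)]
        simp [hxu]
    rw [Finset.sum_congr rfl inner, Finset.sum_ite_eq' T u (fun _ => g u v),
        if_pos huT]
  have hA : ∑ x ∈ T, ∑ y ∈ T, g x y = ∑ x ∈ T, ∑ y ∈ T, g y x := Finset.sum_comm
  have key : ∀ x : Fin (N+1), (∑ y, g x y) - (∑ y, g y x)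
      = (∑ y ∈ T, g x y + ∑ y ∈ Tᶜ, g x y) - (∑ y ∈ T, g y x + ∑ y ∈ Tᶜ, g y x) := by
    intro x
    rw [← hsplit (fun a b => g a b) x, ← hsplit (fun a b => g b a) x]
  have hgv : g u v = 0 := by
    have h := hzero
    rw [Finset.sum_congr rfl (fun x _ => key x)] at h
    rw [Finset.sum_sub_distrib, Finset.sum_add_distrib, Finset.sum_add_distrib,
        hB, hB'] at h
    linarith [hA]
  exact hguv hgv

end GPS
end

section
/- For all positive integers n and m and every a ∈ ℕ^n: every extreme point of the flow polytope F_{G(n,m)}(a,0) is an integer flow, and an integer flow f ∈ F_{G(n,m)}(a,0) is an extreme point of F_{G(n,m)}(a,0) if and only if every vertex of G(n,m) has at most one outgoing edge on which f is positive (i.e., f is unsplittable). -/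
open scoped BigOperators Classical

namespace GPS

section Infra
variable {n m : ℕ}

def rnk (n m : ℕ) : Vtx n m → ℕ
  | some (i, j) => (i : ℕ) * (m + 1) + (j : ℕ)
  | none => n * (m + 1)

lemma not_isEdge_none (v : Vtx n m) : ¬ IsEdge n m none v := by
  cases v <;> simp [IsEdge]

lemma rnk_grid_lt (i : Fin n) (j : Fin (m+1)) : rnk n m (some (i, j)) < n * (m + 1) := by
  have hi : (i : ℕ) + 1 ≤ n := i.isLt
  have hj : (j : ℕ) < m + 1 := j.isLt
  have : ((i : ℕ) + 1) * (m + 1) ≤ n * (m + 1) := Nat.mul_le_mul_right _ hi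
  simp only [rnk]
  nlinarith

lemma rnk_le (u : Vtx n m) : rnk n m u ≤ n * (m + 1) := by
  cases u with
  | none => simp [rnk]
  | some p => exact (rnk_grid_lt p.1 p.2).le

lemma rnk_lt_of_edge {u v : Vtx n m} (h : IsEdge n m u v) : rnk n m u < rnk n m v := by
  match u, v with
  | some (i, j), some (ii, jj) =>
    simp only [IsEdge] at h
    rcases h with ⟨rfl, hj⟩ | ⟨hi, rfl⟩
    · simp [rnk, hj]
    · simp only [rnk, hi]
      nlinarith [j.isLt]
  | some (i, j), none => exact rnk_grid_lt i j
  | none, v => exact absurd h (not_isEdge_none v)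

lemma netflow_grid (a : Fin n → ℕ) (i : Fin n) (j : Fin (m+1)) :
    netflow n m a (fun _ => 0) (some (i, j)) = if (j : ℕ) = 0 then (a i : ℝ) else 0 := by
  simp [netflow]

lemma netflow_grid_nonneg (a : Fin n → ℕ) (i : Fin n) (j : Fin (m+1)) :
    0 ≤ netflow n m a (fun _ => 0) (some (i, j)) := by
  rw [netflow_grid]; positivity

end Infra

section Path
variable {n m : ℕ} {a : Fin n → ℕ} {f : Vtx n m → Vtx n m → ℝ}

lemma edge_of_pos (hf : f ∈ FlowPolytope n m a fun _ => 0) {u v : Vtx n m}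
    (h : 0 < f u v) : IsEdge n m u v := by
  by_contra hc
  rw [hf.1 u v hc] at h
  exact lt_irrefl _ h

lemma eq_zero_of_not_pos {x : ℝ} (h0 : 0 ≤ x) (h : ¬ 0 < x) : x = 0 :=
  le_antisymm (not_lt.1 h) h0

/-- If a non-sink vertex has positive inflow, it has a positive out-edge. -/
lemma goodNext (hf : f ∈ FlowPolytope n m a fun _ => 0) {w : Vtx n m}
    (hw : w ≠ none) {v0 : Vtx n m} (hpos : 0 < f v0 w) :
    ∃ x, IsEdge n m w x ∧ 0 < f w x := by
  have hin : 0 < ∑ v, f v w :=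
    lt_of_lt_of_le hpos (Finset.single_le_sum (fun v _ => hf.2.1 v w) (Finset.mem_univ v0))
  have hnf : 0 ≤ netflow n m a (fun _ => 0) w := by
    obtain ⟨⟨i, j⟩, rfl⟩ := Option.ne_none_iff_exists'.1 hw
    exact netflow_grid_nonneg a i j
  have hout : 0 < ∑ x, f w x := by
    have := hf.2.2 w
    linarith
  have hex : ∃ x, 0 < f w x := by
    by_contra hc
    push_neg at hc
    have : (∑ x, f w x) ≤ 0 := Finset.sum_nonpos fun x _ => hc x
    linarith
  obtain ⟨x, hx⟩ := hex
  exact ⟨x, edge_of_pos hf hx, hx⟩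

noncomputable def pathAux (n m : ℕ) (f : Vtx n m → Vtx n m → ℝ) :
    ℕ → Vtx n m → Vtx n m → Vtx n m → ℝ
  | 0, _ => fun _ _ => 0
  | k+1, v =>
    if h : ∃ w, IsEdge n m v w ∧ 0 < f v w then
      (fun x y => if x = v ∧ y = h.choose then (1:ℝ) else 0) + pathAux n m f k h.choose
    else fun _ _ => 0

lemma pathAux_nonneg (k : ℕ) (v u x : Vtx n m) : 0 ≤ pathAux n m f k v u x := by
  induction k generalizing v with
  | zero => simp [pathAux]
  | succ k ih =>
    rw [pathAux]
    split
    · rename_i hex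
      simp only [Pi.add_apply]
      refine add_nonneg ?_ (ih hex.choose)
      split <;> norm_num
    · exact le_refl 0

lemma pathAux_pos {k : ℕ} {v u x : Vtx n m} (h : 0 < pathAux n m f k v u x) :
    0 < f u x ∧ IsEdge n m u x ∧ rnk n m v ≤ rnk n m u := by
  induction k generalizing v with
  | zero => simp [pathAux] at h
  | succ k ih =>
    rw [pathAux] at h
    split at h
    · rename_i hex
      simp only [Pi.add_apply] at h
      by_cases hc : u = v ∧ x = hex.choose
      · obtain ⟨rfl, rfl⟩ := hc
        exact ⟨hex.choose_spec.2, hex.choose_spec.1, le_refl _⟩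
      · rw [if_neg hc, zero_add] at h
        obtain ⟨h1, h2, h3⟩ := ih h
        exact ⟨h1, h2, le_trans (rnk_lt_of_edge hex.choose_spec.1).le h3⟩
    · simp at h

lemma pathAux_eq_zero_of_rnk {k : ℕ} {v u : Vtx n m} (h : rnk n m u < rnk n m v)
    (x : Vtx n m) : pathAux n m f k v u x = 0 := by
  refine eq_zero_of_not_pos (pathAux_nonneg k v u x) fun hp => ?_
  exact absurd ((pathAux_pos hp).2.2) (by omega)

lemma pathAux_le_one (k : ℕ) (v u x : Vtx n m) : pathAux n m f k v u x ≤ 1 := by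
  induction k generalizing v with
  | zero => simp [pathAux]
  | succ k ih =>
    rw [pathAux]
    split
    · rename_i hex
      simp only [Pi.add_apply]
      by_cases hc : u = v ∧ x = hex.choose
      · obtain ⟨rfl, rfl⟩ := hc
        rw [if_pos ⟨rfl, rfl⟩]
        have h0 : pathAux n m f k hex.choose u hex.choose = 0 :=
          pathAux_eq_zero_of_rnk (rnk_lt_of_edge hex.choose_spec.1) _
        rw [h0]; norm_num
      · rw [if_neg hc, zero_add]; exact ih _
    · norm_num


lemma sum_ind_fst (a b u : Vtx n m) :
    (∑ x, (if u = a ∧ x = b then (1:ℝ) else 0)) = if u = a then 1 else 0 := by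
  by_cases h : u = a <;> simp [h]

lemma sum_ind_snd (a b u : Vtx n m) :
    (∑ x, (if x = a ∧ u = b then (1:ℝ) else 0)) = if u = b then 1 else 0 := by
  by_cases h : u = b <;> simp [h]

lemma pathAux_div (hf : f ∈ FlowPolytope n m a fun _ => 0) :
    ∀ k : ℕ, ∀ v : Vtx n m, n * (m + 1) < rnk n m v + k →
    (v = none ∨ ∃ w, IsEdge n m v w ∧ 0 < f v w) →
    ∀ u, (∑ x, pathAux n m f k v u x) - (∑ x, pathAux n m f k v x u)
        = (if u = v then (1:ℝ) else 0) - (if u = (none : Vtx n m) then 1 else 0) := by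
  intro k
  induction k with
  | zero =>
    intro v hv
    exact absurd hv (by have := rnk_le (n := n) (m := m) v; omega)
  | succ k ih =>
    intro v hv hgood u
    rcases hgood with rfl | hex
    · have hne : ¬ ∃ w, IsEdge n m (none : Vtx n m) w ∧ 0 < f none w := by
        rintro ⟨w, hw, -⟩; exact not_isEdge_none w hw
      rw [pathAux, dif_neg hne]
      simp
    · have hvne : v ≠ none := by
        rintro rfl; exact not_isEdge_none _ hex.choose_spec.1
      rw [pathAux, dif_pos hex]
      have hspec := hex.choose_spec
      have hrank : n * (m + 1) < rnk n m hex.choose + k := by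
        have := rnk_lt_of_edge hspec.1; omega
      have hgoodw : hex.choose = none ∨ ∃ x, IsEdge n m hex.choose x ∧ 0 < f hex.choose x := by
        by_cases hwn : hex.choose = none
        · exact Or.inl hwn
        · exact Or.inr (goodNext hf hwn hspec.2)
      have hIH := ih hex.choose hrank hgoodw u
      simp only [Pi.add_apply]
      rw [Finset.sum_add_distrib, Finset.sum_add_distrib, sum_ind_fst, sum_ind_snd]
      have hwnv : (if u = (none : Vtx n m) then (1:ℝ) else 0) = (if u = (none : Vtx n m) then 1 else 0) := rfl
      linarith [hIH]

lemma not_extreme_of_two_out (hf : f ∈ FlowPolytope n m a fun _ => 0)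
    {u0 v1 v2 : Vtx n m} (h12 : v1 ≠ v2) (h1 : 0 < f u0 v1) (h2 : 0 < f u0 v2) :
    ¬ IsExtremePt (FlowPolytope n m a fun _ => 0) f := by
  intro hext
  have he1 : IsEdge n m u0 v1 := edge_of_pos hf h1
  have he2 : IsEdge n m u0 v2 := edge_of_pos hf h2
  set K := n * (m + 1) + 1 with hK
  set Q1 := pathAux n m f K v1 with hQ1def
  set Q2 := pathAux n m f K v2 with hQ2def
  set E1 : Vtx n m → Vtx n m → ℝ := fun x w => if x = u0 ∧ w = v1 then 1 else 0 with hE1def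
  set E2 : Vtx n m → Vtx n m → ℝ := fun x w => if x = u0 ∧ w = v2 then 1 else 0 with hE2def
  set g : Vtx n m → Vtx n m → ℝ := fun x w => E1 x w + Q1 x w - E2 x w - Q2 x w with hgdef
  -- basic facts about Q1, Q2
  have hQ1nn : ∀ x w, 0 ≤ Q1 x w := fun x w => pathAux_nonneg K v1 x w
  have hQ2nn : ∀ x w, 0 ≤ Q2 x w := fun x w => pathAux_nonneg K v2 x w
  have hQ1le : ∀ x w, Q1 x w ≤ 1 := fun x w => pathAux_le_one K v1 x w
  have hQ2le : ∀ x w, Q2 x w ≤ 1 := fun x w => pathAux_le_one K v2 x w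
  have hQ1u0 : ∀ x, Q1 u0 x = 0 := fun x =>
    pathAux_eq_zero_of_rnk (rnk_lt_of_edge he1) x
  have hQ2u0 : ∀ x, Q2 u0 x = 0 := fun x =>
    pathAux_eq_zero_of_rnk (rnk_lt_of_edge he2) x
  have hE1nn : ∀ x w, 0 ≤ E1 x w := by
    intro x w; rw [hE1def]; dsimp only; split <;> norm_num
  have hE2nn : ∀ x w, 0 ≤ E2 x w := by
    intro x w; rw [hE2def]; dsimp only; split <;> norm_num
  -- g vanishes where f does, and is bounded
  have hgf : ∀ x w, g x w ≠ 0 → 0 < f x w := by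
    intro x w hxw
    by_contra hc
    apply hxw
    have hE1z : E1 x w = 0 := by
      rw [hE1def]; dsimp only; rw [if_neg]; rintro ⟨rfl, rfl⟩; exact hc h1
    have hE2z : E2 x w = 0 := by
      rw [hE2def]; dsimp only; rw [if_neg]; rintro ⟨rfl, rfl⟩; exact hc h2
    have hq1 : Q1 x w = 0 :=
      eq_zero_of_not_pos (hQ1nn x w) fun hp => hc (pathAux_pos hp).1
    have hq2 : Q2 x w = 0 :=
      eq_zero_of_not_pos (hQ2nn x w) fun hp => hc (pathAux_pos hp).1
    rw [hgdef]; dsimp only; rw [hE1z, hE2z, hq1, hq2]; ring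
  have hbound : ∀ x w, -1 ≤ g x w ∧ g x w ≤ 1 := by
    intro x w
    have h1b : E1 x w + Q1 x w ≤ 1 := by
      by_cases hc : x = u0 ∧ w = v1
      · obtain ⟨rfl, rfl⟩ := hc
        rw [hE1def]; dsimp only; rw [if_pos ⟨rfl, rfl⟩, hQ1u0]; norm_num
      · rw [hE1def]; dsimp only; rw [if_neg hc]
        have := hQ1le x w; linarith
    have h2b : E2 x w + Q2 x w ≤ 1 := by
      by_cases hc : x = u0 ∧ w = v2
      · obtain ⟨rfl, rfl⟩ := hc
        rw [hE2def]; dsimp only; rw [if_pos ⟨rfl, rfl⟩, hQ2u0]; norm_num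
      · rw [hE2def]; dsimp only; rw [if_neg hc]
        have := hQ2le x w; linarith
    have := hE1nn x w; have := hE2nn x w
    have := hQ1nn x w; have := hQ2nn x w
    constructor
    · rw [hgdef]; dsimp only; linarith
    · rw [hgdef]; dsimp only; linarith
  -- epsilon
  have hTne : (Finset.univ.filter fun p : Vtx n m × Vtx n m => 0 < f p.1 p.2).Nonempty :=
    ⟨(u0, v1), by simp [h1]⟩
  set ε := (Finset.univ.filter fun p : Vtx n m × Vtx n m => 0 < f p.1 p.2).inf' hTne
      (fun p => f p.1 p.2) with hεdef
  have hεpos : 0 < ε := by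
    rw [hεdef, Finset.lt_inf'_iff]
    intro p hp
    exact (Finset.mem_filter.1 hp).2
  have hεle : ∀ x w, 0 < f x w → ε ≤ f x w := by
    intro x w h
    exact Finset.inf'_le _ (Finset.mem_filter.2 ⟨Finset.mem_univ (x, w), h⟩)
  -- divergence of g is zero
  have hdg : ∀ u, (∑ x, g u x) - (∑ x, g x u) = 0 := by
    intro u
    have good1 : v1 = none ∨ ∃ x, IsEdge n m v1 x ∧ 0 < f v1 x := by
      by_cases hn1 : v1 = none
      · exact Or.inl hn1
      · exact Or.inr (goodNext hf hn1 h1)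
    have good2 : v2 = none ∨ ∃ x, IsEdge n m v2 x ∧ 0 < f v2 x := by
      by_cases hn2 : v2 = none
      · exact Or.inl hn2
      · exact Or.inr (goodNext hf hn2 h2)
    have d1 := pathAux_div hf K v1 (by omega) good1 u
    have d2 := pathAux_div hf K v2 (by omega) good2 u
    have hsplit : ∀ h1f h2f h3f h4f : Vtx n m → ℝ,
        (∑ x, (h1f x + h2f x - h3f x - h4f x))
          = (∑ x, h1f x) + (∑ x, h2f x) - (∑ x, h3f x) - (∑ x, h4f x) := by
      intro h1f h2f h3f h4f
      rw [Finset.sum_sub_distrib, Finset.sum_sub_distrib, Finset.sum_add_distrib]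
    have e1o : (∑ x, E1 u x) = if u = u0 then (1:ℝ) else 0 := by
      simp only [hE1def]; exact sum_ind_fst _ _ _
    have e2o : (∑ x, E2 u x) = if u = u0 then (1:ℝ) else 0 := by
      simp only [hE2def]; exact sum_ind_fst _ _ _
    have e1i : (∑ x, E1 x u) = if u = v1 then (1:ℝ) else 0 := by
      simp only [hE1def]; exact sum_ind_snd _ _ _
    have e2i : (∑ x, E2 x u) = if u = v2 then (1:ℝ) else 0 := by
      simp only [hE2def]; exact sum_ind_snd _ _ _
    have hgo : (∑ x, g u x) = (∑ x, Q1 u x) - (∑ x, Q2 u x) := by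
      have h := hsplit (fun x => E1 u x) (fun x => Q1 u x) (fun x => E2 u x) (fun x => Q2 u x)
      rw [hgdef]; dsimp only
      rw [h, e1o, e2o]; ring
    have hgi : (∑ x, g x u) =
        ((if u = v1 then (1:ℝ) else 0) + ∑ x, Q1 x u)
          - ((if u = v2 then (1:ℝ) else 0) + ∑ x, Q2 x u) := by
      have h := hsplit (fun x => E1 x u) (fun x => Q1 x u) (fun x => E2 x u) (fun x => Q2 x u)
      rw [hgdef]; dsimp only
      rw [h, e1i, e2i]; ring
    rw [hgo, hgi]
    rw [hQ1def, hQ2def] at *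
    linarith [d1, d2]
  -- the two perturbed flows
  set y : Vtx n m → Vtx n m → ℝ := fun x w => f x w + ε * g x w with hydef
  set z : Vtx n m → Vtx n m → ℝ := fun x w => f x w - ε * g x w with hzdef
  have hg0 : ∀ x w, ¬ IsEdge n m x w → g x w = 0 := by
    intro x w hxw
    by_contra hgg
    exact hxw (edge_of_pos hf (hgf x w hgg))
  have hymem : y ∈ FlowPolytope n m a fun _ => 0 := by
    refine ⟨?_, ?_, ?_⟩
    · intro x w hxw
      rw [hydef]; dsimp only
      rw [hf.1 x w hxw, hg0 x w hxw]; ring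
    · intro x w
      rw [hydef]; dsimp only
      rcases eq_or_ne (g x w) 0 with h0 | h0
      · rw [h0]; simpa using hf.2.1 x w
      · have := hεle x w (hgf x w h0)
        have := (hbound x w).1
        nlinarith
    · intro u
      have hgd := hdg u
      have hfc := hf.2.2 u
      have hs1 : (∑ x, y u x) = (∑ x, f u x) + ε * (∑ x, g u x) := by
        rw [hydef]; dsimp only
        rw [Finset.sum_add_distrib, Finset.mul_sum]
      have hs2 : (∑ x, y x u) = (∑ x, f x u) + ε * (∑ x, g x u) := by
        rw [hydef]; dsimp only
        rw [Finset.sum_add_distrib, Finset.mul_sum]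
      rw [hs1, hs2]
      nlinarith [hgd, hfc]
  have hzmem : z ∈ FlowPolytope n m a fun _ => 0 := by
    refine ⟨?_, ?_, ?_⟩
    · intro x w hxw
      rw [hzdef]; dsimp only
      rw [hf.1 x w hxw, hg0 x w hxw]; ring
    · intro x w
      rw [hzdef]; dsimp only
      rcases eq_or_ne (g x w) 0 with h0 | h0
      · rw [h0]; simpa using hf.2.1 x w
      · have := hεle x w (hgf x w h0)
        have := (hbound x w).2
        nlinarith
    · intro u
      have hgd := hdg u
      have hfc := hf.2.2 u
      have hs1 : (∑ x, z u x) = (∑ x, f u x) - ε * (∑ x, g u x) := by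
        rw [hzdef]; dsimp only
        rw [Finset.sum_sub_distrib, Finset.mul_sum]
      have hs2 : (∑ x, z x u) = (∑ x, f x u) - ε * (∑ x, g x u) := by
        rw [hzdef]; dsimp only
        rw [Finset.sum_sub_distrib, Finset.mul_sum]
      rw [hs1, hs2]
      nlinarith [hgd, hfc]
  have hmid : f = (2 : ℝ)⁻¹ • (y + z) := by
    funext x w
    simp only [Pi.smul_apply, Pi.add_apply, smul_eq_mul, hydef, hzdef]
    ring
  have heq := hext.2 y hymem z hzmem hmid
  have h0 : y u0 v1 = z u0 v1 := by rw [heq]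
  have hgval : g u0 v1 = 1 := by
    rw [hgdef]; dsimp only
    rw [hE1def, hE2def]; dsimp only
    rw [if_pos ⟨rfl, rfl⟩, if_neg (by rintro ⟨-, h⟩; exact h12 h), hQ1u0, hQ2u0]
    ring
  rw [hydef, hzdef] at h0
  dsimp only at h0
  rw [hgval] at h0
  linarith

lemma isInt_sum {α : Type*} (s : Finset α) (gg : α → ℝ) (h : ∀ i ∈ s, ∃ z : ℤ, gg i = z) :
    ∃ z : ℤ, (∑ i ∈ s, gg i) = z := by
  refine Finset.sum_induction gg (fun x => ∃ z : ℤ, x = z) ?_ ⟨0, by simp⟩ h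
  rintro x y ⟨zx, rfl⟩ ⟨zy, rfl⟩
  exact ⟨zx + zy, by push_cast; ring⟩

lemma netflow_isInt (a : Fin n → ℕ) (u : Vtx n m) :
    ∃ z : ℤ, netflow n m a (fun _ => 0) u = z := by
  match u with
  | none =>
    refine ⟨-(∑ i, (a i : ℤ)), ?_⟩
    simp [netflow]
  | some (i, j) =>
    rw [netflow_grid]
    by_cases h : (j : ℕ) = 0
    · exact ⟨a i, by rw [if_pos h]; push_cast; ring⟩
    · exact ⟨0, by rw [if_neg h]; simp⟩

lemma integral_of_unsplit (hf : f ∈ FlowPolytope n m a fun _ => 0)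
    (hs : ∀ u v w, 0 < f u v → 0 < f u w → v = w) : IsIntegerFlow f := by
  have key : ∀ k : ℕ, ∀ u : Vtx n m, rnk n m u < k → ∀ w, ∃ z : ℤ, f u w = z := by
    intro k
    induction k with
    | zero => intro u hu; omega
    | succ k ih =>
      intro u hu w
      have hin : ∀ v : Vtx n m, ∃ z : ℤ, f v u = z := by
        intro v
        by_cases he : IsEdge n m v u
        · exact ih v (by have := rnk_lt_of_edge he; omega) u
        · exact ⟨0, by rw [hf.1 v u he]; simp⟩
      have hinS : ∃ z : ℤ, (∑ v, f v u) = z := isInt_sum _ _ fun v _ => hin v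
      have hout : ∃ z : ℤ, (∑ x, f u x) = z := by
        obtain ⟨z1, hz1⟩ := hinS
        obtain ⟨z2, hz2⟩ := netflow_isInt a u
        refine ⟨z2 + z1, ?_⟩
        have := hf.2.2 u
        rw [hz1, hz2] at this
        push_cast
        linarith
      by_cases hex : ∃ w0, 0 < f u w0
      · obtain ⟨w0, hw0⟩ := hex
        have hzero : ∀ x, x ≠ w0 → f u x = 0 := fun x hx =>
          eq_zero_of_not_pos (hf.2.1 u x) fun hp => hx (hs u x w0 hp hw0)
        by_cases hw : w = w0
        · subst hw
          obtain ⟨z, hz⟩ := hout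
          refine ⟨z, ?_⟩
          rw [← hz]
          exact (Finset.sum_eq_single w (fun x _ hx => hzero x hx)
            (fun h => absurd (Finset.mem_univ w) h)).symm
        · exact ⟨0, by rw [hzero w hw]; simp⟩
      · push_neg at hex
        exact ⟨0, by rw [le_antisymm (hex w) (hf.2.1 u w)]; simp⟩
  intro u w
  exact key (rnk n m u + 1) u (Nat.lt_succ_self _) w

lemma extreme_of_unsplit (hf : f ∈ FlowPolytope n m a fun _ => 0)
    (hs : ∀ u v w, 0 < f u v → 0 < f u w → v = w) :
    IsExtremePt (FlowPolytope n m a fun _ => 0) f := by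
  refine ⟨hf, ?_⟩
  intro y hy z hz hmid
  have hsum : ∀ x w, y x w + z x w = 2 * f x w := by
    intro x w
    have h := congrFun (congrFun hmid x) w
    simp only [Pi.smul_apply, Pi.add_apply, smul_eq_mul] at h
    linarith
  have hzero : ∀ x w, f x w = 0 → y x w = 0 ∧ z x w = 0 := by
    intro x w h0
    have h := hsum x w
    rw [h0] at h
    have h1 := hy.2.1 x w
    have h2 := hz.2.1 x w
    constructor <;> linarith
  have key : ∀ k : ℕ, ∀ u : Vtx n m, rnk n m u < k → ∀ w, y u w = z u w := by
    intro k
    induction k with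
    | zero => intro u hu; omega
    | succ k ih =>
      intro u hu w
      have hin : ∀ v, y v u = z v u := by
        intro v
        by_cases he : IsEdge n m v u
        · exact ih v (by have := rnk_lt_of_edge he; omega) u
        · rw [hy.1 v u he, hz.1 v u he]
      have hc : (∑ x, y u x) = ∑ x, z u x := by
        have h1 := hy.2.2 u
        have h2 := hz.2.2 u
        have h3 : (∑ x, y x u) = ∑ x, z x u := Finset.sum_congr rfl fun x _ => hin x
        linarith
      by_cases hex : ∃ w0, 0 < f u w0
      · obtain ⟨w0, hw0⟩ := hex
        have hzf : ∀ x, x ≠ w0 → f u x = 0 := fun x hx =>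
          eq_zero_of_not_pos (hf.2.1 u x) fun hp => hx (hs u x w0 hp hw0)
        by_cases hw : w = w0
        · subst hw
          have e1 : (∑ x, y u x) = y u w :=
            Finset.sum_eq_single w (fun x _ hx => (hzero u x (hzf x hx)).1)
              (fun h => absurd (Finset.mem_univ w) h)
          have e2 : (∑ x, z u x) = z u w :=
            Finset.sum_eq_single w (fun x _ hx => (hzero u x (hzf x hx)).2)
              (fun h => absurd (Finset.mem_univ w) h)
          rw [← e1, ← e2, hc]
        · have h0 := hzero u w (hzf w hw)
          rw [h0.1, h0.2]
      · push_neg at hex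
        have h0 := hzero u w (le_antisymm (hex w) (hf.2.1 u w))
        rw [h0.1, h0.2]
  funext u w
  exact key (rnk n m u + 1) u (Nat.lt_succ_self _) w

end Path

/-- For `b = 0`, every extreme point of `F_{G(n,m)}(a,0)` is an
integer flow, and an integer flow is an extreme point iff every vertex has at
most one outgoing edge with positive flow (i.e. the flow is unsplittable). -/
theorem statement5 (n m : ℕ) (hn : 0 < n) (hm : 0 < m) (a : Fin n → ℕ) :
    (∀ f, IsExtremePt (FlowPolytope n m a fun _ => 0) f → IsIntegerFlow f) ∧
    (∀ f ∈ FlowPolytope n m a fun _ => 0, IsIntegerFlow f →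
      (IsExtremePt (FlowPolytope n m a fun _ => 0) f ↔
        ∀ u v w, 0 < f u v → 0 < f u w → v = w)) := by
  constructor
  · intro f hext
    have hs : ∀ u v w, 0 < f u v → 0 < f u w → v = w := by
      intro u v w hv hw
      by_contra hne
      exact not_extreme_of_two_out hext.1 hne hv hw hext
    exact integral_of_unsplit hext.1 hs
  · intro f hf _hint
    constructor
    · intro hext u v w hv hw
      by_contra hne
      exact not_extreme_of_two_out hf hne hv hw hext
    · intro hs
      exact extreme_of_unsplit hf hs


end GPS
end
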